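/- arXiv:1204.2135 — 3 statements merged into one kernel-verified Lean document; each statement's English description precedes it below -/
import Mathlib

section
/- Let μ be a finite nonnegative Borel measure on R^d satisfying the growth condition μ(B(x,t)) ≤ C₁ t^s for all balls, where s ∈ (d-1, d). Then there is a constant c₆ > 0 (depending only on s, d, C₁) such that for any ball B(x,t) with μ(B(x,t)) ≥ λ t^s (where 0 < λ ≤ 1), the contracted ball satisfies μ(B(x, t(1 - c₆ λ^{1/(s+1-d)}))) ≥ (λ/2) t^s. -/
/-!
Averaging replaces the covering of the shell `A = B(x,t) \ B(x,(1-θ)t)` by `θ^{1-d}` balls of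
radius `r = θt`: by Tonelli, `∫ μ(A ∩ B(z,r)) dz = μ(A) |B(0,r)|`, while the integrand is at most
`C₁ r^s` and vanishes outside the `r`-neighbourhood of `A`, a shell of volume `≲ θ t^d`. Hence
`μ(A) ≲ C₁ θ^{s+1-d} t^s`, and `θ = c₆ λ^{1/(s+1-d)}` makes this at most `λ t^s / 2`.
-/

open MeasureTheory Metric Set

theorem thickening_ball_sdiff_ball_subset {X : Type*} [PseudoMetricSpace X] (x : X)
    {r R R' : ℝ} :
    thickening r (ball x R \ ball x R') ⊆ ball x (R + r) \ closedBall x (R' - r) := by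
  intro z hz
  obtain ⟨y, ⟨hyR, hyR'⟩, hzy⟩ := mem_thickening_iff.1 hz
  rw [mem_ball] at hyR
  rw [mem_ball, not_lt] at hyR'
  refine ⟨mem_ball.2 ?_, fun hz' => ?_⟩
  · linarith [dist_triangle z y x]
  · linarith [mem_closedBall.1 hz', dist_triangle y z x, dist_comm y z]

theorem one_add_pow_sub_one_sub_two_mul_pow_le {θ : ℝ} (h₀ : 0 ≤ θ) (h₁ : θ ≤ 1 / 2) (n : ℕ) :
    (1 + θ) ^ n - (1 - 2 * θ) ^ n ≤ 3 * n * 2 ^ (n - 1) * θ := by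
  have hmax : max |1 + θ| |1 - 2 * θ| ≤ 2 := by
    rw [abs_of_nonneg (by linarith), abs_of_nonneg (by linarith)]
    exact max_le (by linarith) (by linarith)
  calc (1 + θ) ^ n - (1 - 2 * θ) ^ n ≤ |(1 + θ) ^ n - (1 - 2 * θ) ^ n| := le_abs_self _
    _ ≤ |(1 + θ) - (1 - 2 * θ)| * n * max |1 + θ| |1 - 2 * θ| ^ (n - 1) := abs_pow_sub_pow_le ..
    _ ≤ 3 * θ * n * 2 ^ (n - 1) := by
      rw [show (1 + θ) - (1 - 2 * θ) = 3 * θ by ring, abs_of_nonneg (by linarith)]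
      gcongr
    _ = 3 * n * 2 ^ (n - 1) * θ := by ring

section HaarAveraging

variable {E : Type*} [NormedAddCommGroup E] [NormedSpace ℝ E] [FiniteDimensional ℝ E]
  [MeasurableSpace E] [BorelSpace E] (μ ν : Measure E) [SFinite μ] [ν.IsAddHaarMeasure]

theorem lintegral_measure_inter_ball {A : Set E} (hA : MeasurableSet A) (r : ℝ) :
    ∫⁻ z, μ (A ∩ ball z r) ∂ν = μ A * ν (ball 0 r) := by
  set S : Set (E × E) := {p | p.1 ∈ A ∧ dist p.1 p.2 < r}
  have hS : MeasurableSet S :=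
    measurable_fst hA |>.inter (measurableSet_lt measurable_dist measurable_const)
  calc ∫⁻ z, μ (A ∩ ball z r) ∂ν = μ.prod ν S := (Measure.prod_apply_symm hS).symm
    _ = ∫⁻ y, A.indicator (fun _ => ν (ball 0 r)) y ∂μ := by
        rw [Measure.prod_apply hS]
        congr! with y
        by_cases hy : y ∈ A
        · rw [indicator_of_mem hy, ← Measure.addHaar_ball_center ν y]
          congr 1
          ext z
          simp [S, hy, dist_comm]
        · simp [S, hy]
    _ = μ A * ν (ball 0 r) := by rw [lintegral_indicator_const hA, mul_comm]

theorem measure_mul_addHaar_ball_le {A : Set E} (hA : MeasurableSet A) {r : ℝ} {m : ENNReal}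
    (hm : ∀ z, μ (ball z r) ≤ m) : μ A * ν (ball 0 r) ≤ m * ν (thickening r A) := by
  rw [← lintegral_measure_inter_ball μ ν hA,
    ← lintegral_indicator_const isOpen_thickening.measurableSet]
  refine lintegral_mono fun z => ?_
  by_cases hz : z ∈ thickening r A
  · rw [indicator_of_mem hz]
    exact (measure_mono inter_subset_right).trans (hm z)
  · have : A ∩ ball z r = ∅ := by
      refine eq_empty_of_forall_notMem fun y ⟨hyA, hyz⟩ => hz ?_
      exact mem_thickening_iff.2 ⟨y, hyA, by rwa [mem_ball, dist_comm] at hyz⟩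
    simp [this]

theorem addHaar_ball_sdiff_closedBall (x : E) {R₁ R₂ : ℝ} (h₀ : 0 ≤ R₁) (h : R₁ < R₂) :
    ν (ball x R₂ \ closedBall x R₁) =
      ENNReal.ofReal (R₂ ^ Module.finrank ℝ E - R₁ ^ Module.finrank ℝ E) * ν (ball 0 1) := by
  rw [measure_sdiff (closedBall_subset_ball h) measurableSet_closedBall.nullMeasurableSet
    measure_closedBall_lt_top.ne, Measure.addHaar_ball_of_pos ν x (h₀.trans_lt h),
    Measure.addHaar_closedBall ν x h₀, ← ENNReal.sub_mul (fun _ _ => measure_ball_lt_top.ne),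
    ← ENNReal.ofReal_sub _ (by positivity)]

variable {μ} in
theorem measure_ball_sdiff_ball_le {C s : ℝ} (hC : 0 ≤ C)
    (hgrowth : ∀ z r, 0 < r → μ (ball z r) ≤ ENNReal.ofReal (C * r ^ s))
    (x : E) {t θ : ℝ} (ht : 0 < t) (hθ₀ : 0 < θ) (hθ₁ : θ ≤ 1 / 2) :
    μ (ball x t \ ball x (t * (1 - θ))) ≤ ENNReal.ofReal
      (3 * Module.finrank ℝ E * 2 ^ (Module.finrank ℝ E - 1) * C *
        θ ^ (s + 1 - Module.finrank ℝ E) * t ^ s) := by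
  set n := Module.finrank ℝ E
  set K := 3 * n * 2 ^ (n - 1) * C * θ ^ (s + 1 - n) * t ^ s
  set ν : Measure E := Measure.addHaar
  set r := θ * t
  have hr : 0 < r := mul_pos hθ₀ ht
  have hshell : ν (thickening r (ball x t \ ball x (t * (1 - θ)))) ≤
      ENNReal.ofReal ((t + r) ^ n - (t * (1 - θ) - r) ^ n) * ν (ball 0 1) :=
    (measure_mono (thickening_ball_sdiff_ball_subset x)).trans_eq
      (addHaar_ball_sdiff_closedBall ν x (by nlinarith) (by nlinarith))
  have hreal : C * r ^ s * ((t + r) ^ n - (t * (1 - θ) - r) ^ n) ≤ K * r ^ n := by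
    have hpow : (t + r) ^ n - (t * (1 - θ) - r) ^ n =
        t ^ n * ((1 + θ) ^ n - (1 - 2 * θ) ^ n) := by
      rw [show t + r = t * (1 + θ) by ring, show t * (1 - θ) - r = t * (1 - 2 * θ) by ring,
        mul_pow, mul_pow]
      ring
    have hθpow : θ ^ (s + 1 - n) * θ ^ n = θ ^ s * θ := by
      rw [Real.rpow_sub_natCast hθ₀.ne', Real.rpow_add_one hθ₀.ne',
        div_mul_cancel₀ _ (by positivity)]
    calc C * r ^ s * ((t + r) ^ n - (t * (1 - θ) - r) ^ n)
        = C * θ ^ s * t ^ s * t ^ n * ((1 + θ) ^ n - (1 - 2 * θ) ^ n) := by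
          rw [hpow, Real.mul_rpow hθ₀.le ht.le]; ring
      _ ≤ C * θ ^ s * t ^ s * t ^ n * (3 * n * 2 ^ (n - 1) * θ) := by
          gcongr; exact one_add_pow_sub_one_sub_two_mul_pow_le hθ₀.le hθ₁ n
      _ = K * r ^ n := by
          rw [mul_pow]
          linear_combination (-3 * n * 2 ^ (n - 1) * C * t ^ s * t ^ n) * hθpow
  refine (ENNReal.mul_le_mul_iff_left (measure_ball_pos ν 0 hr).ne' measure_ball_lt_top.ne).1 ?_
  calc μ (ball x t \ ball x (t * (1 - θ))) * ν (ball 0 r)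
      ≤ ENNReal.ofReal (C * r ^ s) * ν (thickening r (ball x t \ ball x (t * (1 - θ)))) :=
        measure_mul_addHaar_ball_le μ ν (measurableSet_ball.diff measurableSet_ball)
          (fun z => hgrowth z r hr)
    _ ≤ ENNReal.ofReal (C * r ^ s) *
          (ENNReal.ofReal ((t + r) ^ n - (t * (1 - θ) - r) ^ n) * ν (ball 0 1)) :=
        mul_le_mul_right hshell _
    _ ≤ ENNReal.ofReal (K * r ^ n) * ν (ball 0 1) := by
        rw [← mul_assoc, ← ENNReal.ofReal_mul (by positivity)]
        gcongr
    _ = ENNReal.ofReal K * ν (ball 0 r) := by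
        rw [Measure.addHaar_ball_of_pos ν 0 hr, ENNReal.ofReal_mul (by positivity), mul_assoc]

end HaarAveraging

/-- If a finite measure on `ℝ^d` satisfies the growth bound `μ(B(x,t)) ≤ C₁ t^s`
with `d-1 < s < d`, then there is `c₆ > 0` (depending on `s`, `d`, `C₁`) such that
any ball with `μ(B(x,t)) ≥ λ t^s` (for `0 < λ ≤ 1`) keeps half of this mass after
contracting the radius by the factor `1 - c₆ λ^{1/(s+1-d)}`. -/
theorem contracted_ball_keeps_mass
    (d : ℕ) (hd : 2 ≤ d) (s : ℝ) (hs : s ∈ Set.Ioo ((d : ℝ) - 1) d)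
    (μ : Measure (EuclideanSpace ℝ (Fin d))) [IsFiniteMeasure μ]
    (C₁ : ℝ) (hC₁ : 0 < C₁)
    (hgrowth : ∀ (x : EuclideanSpace ℝ (Fin d)) (t : ℝ), 0 < t →
      μ (ball x t) ≤ ENNReal.ofReal (C₁ * t ^ s)) :
    ∃ c₆ : ℝ, 0 < c₆ ∧
      ∀ (x : EuclideanSpace ℝ (Fin d)) (t lam : ℝ), 0 < t → 0 < lam → lam ≤ 1 →
        ENNReal.ofReal (lam * t ^ s) ≤ μ (ball x t) →
        ENNReal.ofReal (lam / 2 * t ^ s) ≤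
          μ (ball x (t * (1 - c₆ * lam ^ (1 / (s + 1 - d))))) := by
  set ε := s + 1 - d
  have hε : 0 < ε := by linarith [hs.1]
  set K := 3 * d * 2 ^ (d - 1) * C₁
  have hK : 0 < K := by
    have hd₀ : (0 : ℝ) < d := by norm_cast; omega
    positivity
  set c₆ := min (1 / 2) ((2 * K)⁻¹ ^ ε⁻¹)
  have hc₆ : 0 < c₆ := lt_min one_half_pos (by positivity)
  refine ⟨c₆, hc₆, fun x t lam ht hlam hlam₁ hmass => ?_⟩
  set θ := c₆ * lam ^ (1 / ε)
  have hθ₀ : 0 < θ := by positivity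
  have hθ₁ : θ ≤ 1 / 2 :=
    (mul_le_mul (min_le_left _ _) (Real.rpow_le_one hlam.le hlam₁ (by positivity))
      (by positivity) (by norm_num)).trans_eq (mul_one _)
  have hKθ : K * θ ^ ε ≤ lam / 2 := by
    have hc₆ε : c₆ ^ ε ≤ (2 * K)⁻¹ :=
      (Real.rpow_le_rpow hc₆.le (min_le_right _ _) hε.le).trans_eq
        (Real.rpow_inv_rpow (by positivity) hε.ne')
    calc K * θ ^ ε = K * c₆ ^ ε * lam := by
          rw [Real.mul_rpow hc₆.le (by positivity), one_div, Real.rpow_inv_rpow hlam.le hε.ne']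
          ring
      _ ≤ K * (2 * K)⁻¹ * lam := by gcongr
      _ = lam / 2 := by field_simp
  have hshell : μ (ball x t \ ball x (t * (1 - θ))) ≤ ENNReal.ofReal (lam / 2 * t ^ s) := by
    refine (measure_ball_sdiff_ball_le hC₁.le hgrowth x ht hθ₀ hθ₁).trans
      (ENNReal.ofReal_le_ofReal ?_)
    rw [finrank_euclideanSpace_fin]
    gcongr
  refine (ENNReal.add_le_add_iff_right (ENNReal.ofReal_ne_top (r := lam / 2 * t ^ s))).1 ?_
  calc ENNReal.ofReal (lam / 2 * t ^ s) + ENNReal.ofReal (lam / 2 * t ^ s)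
      = ENNReal.ofReal (lam * t ^ s) := by
        rw [← ENNReal.ofReal_add (by positivity) (by positivity)]
        congr 1
        ring
    _ ≤ μ (ball x t) := hmass
    _ ≤ μ (ball x t ∩ ball x (t * (1 - θ))) + μ (ball x t \ ball x (t * (1 - θ))) :=
        measure_le_inter_add_sdiff μ _ _
    _ ≤ μ (ball x (t * (1 - θ))) + ENNReal.ofReal (lam / 2 * t ^ s) :=
        add_le_add (measure_mono inter_subset_right) hshell
end

section
/- Let Φ : [0,∞) → [0,∞) satisfy Φ(0)=0, Φ continuous and strictly increasing, and suppose there exist σ, ϰ > 0 such that t ↦ Φ(t)/t^σ is nondecreasing on (0, ϰ]. Define the Wolff potential W_{Φ,s}(μ)(x) = ∫₀^∞ Φ(μ(B(x,r))/r^s) dr/r and, for A > 0, cap_{Φ,s}^{(A)}(E) = sup{ μ(E) : supp(μ) ⊂ E, W_{Φ,s}(μ)(x) ≤ A for all x }. Then for any 0 < A' < A there is a constant C = C(A', A, σ, ϰ, s) > 0 such that for all compact E ⊂ R^d: cap_{Φ,s}^{(A')}(E) ≤ cap_{Φ,s}^{(A)}(E) ≤ C · cap_{Φ,s}^{(A')}(E).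 -/
/-!
A bound `W(μ) ≤ A` forces `Φ(μ(B(x,r)) / (M r)^s) log M ≤ A` for every `M ≥ 1`, by
integrating `dt/t` over `[r, M r]`. With `M = exp (A / Φ ϰ)` all the arguments
`μ(B(x,r)) / (M r)^s` lie in `[0, ϰ]`, where the growth condition on `Φ` gives
`Φ(c u) ≤ c^σ Φ(u)` for `c ≤ 1`. Hence `(A'/A)^{1/σ} M^{-s} μ` has Wolff potential at most `A'`,
which compares the two capacities.
-/

open MeasureTheory Metric Set
open scoped ENNReal

/-- The `s`-dimensional Wolff potential of `μ` with gauge `Φ`. -/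
noncomputable def wolffPotential (d : ℕ) (s : ℝ) (Φ : ℝ → ℝ)
    (μ : Measure (EuclideanSpace ℝ (Fin d))) (x : EuclideanSpace ℝ (Fin d)) : ℝ≥0∞ :=
  ∫⁻ r in Set.Ioi (0 : ℝ), ENNReal.ofReal (Φ ((μ (ball x r)).toReal / r ^ s) / r)

/-- The nonlinear capacity at level `A` associated to the gauge `Φ`. -/
noncomputable def capPhi (d : ℕ) (s : ℝ) (Φ : ℝ → ℝ) (A : ℝ)
    (E : Set (EuclideanSpace ℝ (Fin d))) : ℝ≥0∞ :=
  sSup {m : ℝ≥0∞ | ∃ μ : Measure (EuclideanSpace ℝ (Fin d)), IsFiniteMeasure μ ∧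
    μ Eᶜ = 0 ∧ (∀ x, wolffPotential d s Φ μ x ≤ ENNReal.ofReal A) ∧ m = μ E}

lemma apply_mul_le_rpow_mul_apply {Φ : ℝ → ℝ} {σ ϰ : ℝ} (hΦ0 : Φ 0 = 0)
    (hΦ : MonotoneOn (fun t => Φ t / t ^ σ) (Ioc 0 ϰ)) {c u : ℝ} (hc0 : 0 < c) (hc1 : c ≤ 1)
    (hu0 : 0 ≤ u) (huϰ : u ≤ ϰ) :
    Φ (c * u) ≤ c ^ σ * Φ u := by
  rcases hu0.eq_or_lt with rfl | hu
  · simp [hΦ0]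
  have hcu : c * u ≤ u := mul_le_of_le_one_left hu.le hc1
  have h := hΦ ⟨mul_pos hc0 hu, hcu.trans huϰ⟩ ⟨hu, huϰ⟩ hcu
  simp only at h
  rw [div_le_div_iff₀ (by positivity) (by positivity), Real.mul_rpow hc0.le hu.le] at h
  exact le_of_mul_le_mul_right (by linarith) (Real.rpow_pos_of_pos hu σ)

section Wolff

variable {d : ℕ} {s : ℝ} {Φ : ℝ → ℝ} (μ : Measure (EuclideanSpace ℝ (Fin d)))

lemma ofReal_mul_log_le_wolffPotential [IsFiniteMeasure μ] (hs : 0 ≤ s) (hΦ0 : Φ 0 = 0)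
    (hΦ : MonotoneOn Φ (Ici 0)) (x : EuclideanSpace ℝ (Fin d)) {M r : ℝ} (hM : 1 ≤ M)
    (hr : 0 < r) :
    ENNReal.ofReal (Φ ((μ (ball x r)).toReal / (M * r) ^ s) * Real.log M) ≤
      wolffPotential d s Φ μ x := by
  set u := (μ (ball x r)).toReal / (M * r) ^ s
  have hrMr : r ≤ M * r := le_mul_of_one_le_left hr.le hM
  have hu0 : 0 ≤ u := by positivity
  have hΦu : 0 ≤ Φ u := hΦ0 ▸ hΦ self_mem_Ici hu0 hu0
  have hlog : ∫ t in Ioc r (M * r), Φ u / t = Φ u * Real.log M := by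
    simp_rw [← intervalIntegral.integral_of_le hrMr, div_eq_mul_inv,
      intervalIntegral.integral_const_mul, integral_inv_of_pos hr (hr.trans_le hrMr),
      mul_div_cancel_right₀ M hr.ne']
  have hint : IntegrableOn (fun t => Φ u / t) (Ioc r (M * r)) :=
    ((continuousOn_const.div continuousOn_id fun t ht => (hr.trans_le ht.1).ne').integrableOn_Icc
      ).mono_set Ioc_subset_Icc_self
  calc ENNReal.ofReal (Φ u * Real.log M)
      = ∫⁻ t in Ioc r (M * r), ENNReal.ofReal (Φ u / t) := by
        rw [← hlog, ofReal_integral_eq_lintegral_ofReal hint]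
        exact (ae_restrict_mem measurableSet_Ioc).mono fun t ht =>
          div_nonneg hΦu (hr.trans ht.1).le
    _ ≤ ∫⁻ t in Ioc r (M * r), ENNReal.ofReal (Φ ((μ (ball x t)).toReal / t ^ s) / t) := by
        refine setLIntegral_mono' measurableSet_Ioc fun t ht => ?_
        have ht0 : 0 < t := hr.trans ht.1
        refine ENNReal.ofReal_le_ofReal
          (div_le_div_of_nonneg_right (hΦ hu0 (mem_Ici.mpr (by positivity)) ?_) ht0.le)
        exact div_le_div₀ ENNReal.toReal_nonneg
          (ENNReal.toReal_mono (measure_ne_top μ _) (measure_mono (ball_subset_ball ht.1.le)))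
          (by positivity) (Real.rpow_le_rpow ht0.le ht.2 hs)
    _ ≤ wolffPotential d s Φ μ x := lintegral_mono_set fun t ht => hr.trans ht.1

lemma measure_ball_div_le_of_wolffPotential_le [IsFiniteMeasure μ] (hs : 0 ≤ s) (hΦ0 : Φ 0 = 0)
    (hΦ : StrictMonoOn Φ (Ici 0)) {ϰ A : ℝ} (hϰ : 0 < ϰ) (hA : 0 < A)
    (hW : ∀ x, wolffPotential d s Φ μ x ≤ ENNReal.ofReal A) (x : EuclideanSpace ℝ (Fin d))
    {r : ℝ} (hr : 0 < r) :
    (μ (ball x r)).toReal / (Real.exp (A / Φ ϰ) * r) ^ s ≤ ϰ := by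
  have hΦϰ : 0 < Φ ϰ := hΦ0 ▸ hΦ self_mem_Ici hϰ.le hϰ
  have hbound := (ofReal_mul_log_le_wolffPotential μ hs hΦ0 hΦ.monotoneOn x
    (Real.one_le_exp (by positivity : 0 ≤ A / Φ ϰ)) hr).trans (hW x)
  rw [ENNReal.ofReal_le_ofReal_iff hA.le, Real.log_exp, mul_div_assoc', div_le_iff₀ hΦϰ,
    mul_comm A] at hbound
  exact (hΦ.le_iff_le (mem_Ici.mpr (by positivity)) hϰ.le).mp
    (le_of_mul_le_mul_right hbound hA)

lemma wolffPotential_smul_le {σ ϰ M c : ℝ} (hs : 0 ≤ s) (hΦ0 : Φ 0 = 0)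
    (hΦ : MonotoneOn Φ (Ici 0)) (hΦhom : MonotoneOn (fun t => Φ t / t ^ σ) (Ioc 0 ϰ))
    (hM : 1 ≤ M) (hc0 : 0 < c) (hc1 : c ≤ 1)
    (hμ : ∀ x, ∀ r > 0, (μ (ball x r)).toReal / (M * r) ^ s ≤ ϰ)
    (x : EuclideanSpace ℝ (Fin d)) :
    wolffPotential d s Φ (ENNReal.ofReal (c / M ^ s) • μ) x ≤
      ENNReal.ofReal (c ^ σ) * wolffPotential d s Φ μ x := by
  rw [wolffPotential, wolffPotential, ← lintegral_const_mul' _ _ ENNReal.ofReal_ne_top]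
  refine setLIntegral_mono' measurableSet_Ioi fun t (ht : 0 < t) => ?_
  set u := (μ (ball x t)).toReal / (M * t) ^ s
  have hMs : 0 < M ^ s := Real.rpow_pos_of_pos (by linarith) s
  have hscale : ((ENNReal.ofReal (c / M ^ s) • μ) (ball x t)).toReal / t ^ s = c * u := by
    rw [Measure.smul_apply, smul_eq_mul, ENNReal.toReal_mul, ENNReal.toReal_ofReal (by positivity)]
    simp only [u, Real.mul_rpow (by linarith : (0 : ℝ) ≤ M) ht.le]
    field_simp
  have hu : u ≤ (μ (ball x t)).toReal / t ^ s :=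
    div_le_div_of_nonneg_left ENNReal.toReal_nonneg (by positivity)
      (Real.rpow_le_rpow ht.le (le_mul_of_one_le_left ht.le hM) hs)
  rw [hscale, ← ENNReal.ofReal_mul (by positivity), ← mul_div_assoc (c ^ σ)]
  refine ENNReal.ofReal_le_ofReal (div_le_div_of_nonneg_right ?_ ht.le)
  calc Φ (c * u) ≤ c ^ σ * Φ u :=
        apply_mul_le_rpow_mul_apply hΦ0 hΦhom hc0 hc1 (by positivity) (hμ x t ht)
    _ ≤ c ^ σ * Φ ((μ (ball x t)).toReal / t ^ s) := by
        gcongr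
        exact hΦ (mem_Ici.mpr (by positivity)) (mem_Ici.mpr (by positivity)) hu

end Wolff

section Capacity

variable {d : ℕ} {s : ℝ} {Φ : ℝ → ℝ}

lemma capPhi_mono {A B : ℝ} (hAB : A ≤ B) (E : Set (EuclideanSpace ℝ (Fin d))) :
    capPhi d s Φ A E ≤ capPhi d s Φ B E :=
  sSup_le_sSup fun _ ⟨μ, hμ, hEc, hW, hm⟩ =>
    ⟨μ, hμ, hEc, fun x => (hW x).trans (ENNReal.ofReal_le_ofReal hAB), hm⟩

lemma capPhi_le_ofReal_inv_mul_capPhi {A B c : ℝ} (hc : 0 < c)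
    (h : ∀ μ : Measure (EuclideanSpace ℝ (Fin d)), IsFiniteMeasure μ →
      (∀ x, wolffPotential d s Φ μ x ≤ ENNReal.ofReal A) →
      ∀ x, wolffPotential d s Φ (ENNReal.ofReal c • μ) x ≤ ENNReal.ofReal B)
    (E : Set (EuclideanSpace ℝ (Fin d))) :
    capPhi d s Φ A E ≤ ENNReal.ofReal c⁻¹ * capPhi d s Φ B E := by
  refine sSup_le fun _ ⟨μ, hμ, hEc, hW, hm⟩ => ?_
  have hmem : (ENNReal.ofReal c • μ) E ≤ capPhi d s Φ B E :=
    le_sSup ⟨_, μ.smul_finite ENNReal.ofReal_ne_top, by simp [hEc], h μ hμ hW, rfl⟩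
  calc _ = ENNReal.ofReal c⁻¹ * (ENNReal.ofReal c • μ) E := by
        rw [hm, Measure.smul_apply, smul_eq_mul, ← mul_assoc,
          ← ENNReal.ofReal_mul (by positivity), inv_mul_cancel₀ hc.ne', ENNReal.ofReal_one,
          one_mul]
    _ ≤ _ := by gcongr

end Capacity

theorem capacity_level_comparison_general
    (d : ℕ) (s : ℝ) (hs : 0 < s)
    (Φ : ℝ → ℝ) (hΦ0 : Φ 0 = 0)
    (hΦmono : StrictMonoOn Φ (Set.Ici (0 : ℝ)))
    (σ ϰ : ℝ) (hσ : 0 < σ) (hϰ : 0 < ϰ)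
    (hΦhom : MonotoneOn (fun t => Φ t / t ^ σ) (Set.Ioc (0 : ℝ) ϰ))
    (A' A : ℝ) (hA' : 0 < A') (hAA : A' < A) :
    ∃ C : ℝ, 0 < C ∧ ∀ E : Set (EuclideanSpace ℝ (Fin d)), IsCompact E →
      capPhi d s Φ A' E ≤ capPhi d s Φ A E ∧
      capPhi d s Φ A E ≤ ENNReal.ofReal C * capPhi d s Φ A' E := by
  have hA : 0 < A := hA'.trans hAA
  have hΦϰ : 0 < Φ ϰ := hΦ0 ▸ hΦmono self_mem_Ici hϰ.le hϰ
  set M := Real.exp (A / Φ ϰ)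
  set c := (A' / A) ^ σ⁻¹
  have hc0 : 0 < c := by positivity
  have hc1 : c ≤ 1 :=
    Real.rpow_le_one (by positivity) ((div_le_one hA).mpr hAA.le) (by positivity)
  have hcσ : c ^ σ = A' / A := by
    rw [← Real.rpow_mul (by positivity), inv_mul_cancel₀ hσ.ne', Real.rpow_one]
  refine ⟨(c / M ^ s)⁻¹, by positivity, fun E _ => ⟨capPhi_mono hAA.le E, ?_⟩⟩
  refine capPhi_le_ofReal_inv_mul_capPhi (by positivity) (fun μ _ hW x => ?_) E
  have hball := measure_ball_div_le_of_wolffPotential_le μ hs.le hΦ0 hΦmono hϰ hA hW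
  calc wolffPotential d s Φ (ENNReal.ofReal (c / M ^ s) • μ) x
      ≤ ENNReal.ofReal (c ^ σ) * wolffPotential d s Φ μ x :=
        wolffPotential_smul_le μ hs.le hΦ0 hΦmono.monotoneOn hΦhom
          (Real.one_le_exp (by positivity)) hc0 hc1 (fun y _ hr => hball y hr) x
    _ ≤ ENNReal.ofReal (c ^ σ) * ENNReal.ofReal A := by gcongr; exact hW x
    _ = ENNReal.ofReal A' := by
        rw [← ENNReal.ofReal_mul (by positivity), hcσ, div_mul_cancel₀ _ hA.ne']

/-- Comparison of nonlinear capacities at different levels: for `0 < A' < A`,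
`cap^{(A')} ≤ cap^{(A)} ≤ C cap^{(A')}` with `C = C(A',A,σ,ϰ,s)`. -/
theorem capacity_level_comparison
    (d : ℕ) (hd : 2 ≤ d) (s : ℝ) (hs : 0 < s)
    (Φ : ℝ → ℝ) (hΦ0 : Φ 0 = 0) (hΦcont : Continuous Φ)
    (hΦmono : StrictMonoOn Φ (Set.Ici (0 : ℝ)))
    (σ ϰ : ℝ) (hσ : 0 < σ) (hϰ : 0 < ϰ)
    (hΦhom : MonotoneOn (fun t => Φ t / t ^ σ) (Set.Ioc (0 : ℝ) ϰ))
    (A' A : ℝ) (hA' : 0 < A') (hAA : A' < A) :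
    ∃ C : ℝ, 0 < C ∧ ∀ E : Set (EuclideanSpace ℝ (Fin d)), IsCompact E →
      capPhi d s Φ A' E ≤ capPhi d s Φ A E ∧
      capPhi d s Φ A E ≤ ENNReal.ofReal C * capPhi d s Φ A' E :=
  capacity_level_comparison_general d s hs Φ hΦ0 hΦmono σ ϰ hσ hϰ hΦhom A' A hA' hAA
end

section
/- Oscillation lemma for the Riesz transform: let ν be a finite signed (vector-valued allowed) Borel measure on R^d, let Ω ⊂ B = B(z,ρ) with dist(Ω, supp(ν)) ≥ ερ, and define R(ν)(x) = ∫ (y−x)/|y−x|^{1+s} dν(y). Then for M ≥ 6, osc_Ω R(ν) := sup{|R(ν)(x) − R(ν)(x')| : x, x' ∈ Ω} ≤ (2/(ερ)^s) |ν|(B(z, Mρ/3)) + (C/M) sup_{r>0} |ν|(B(z,r))/r^s, where C depends only on s and d. -/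
open MeasureTheory Metric Set
open scoped ENNReal

/-- The fractional Riesz kernel `K(w) = w / |w|^{1+s}`. -/
noncomputable def rieszKernel (d : ℕ) (s : ℝ) (w : EuclideanSpace ℝ (Fin d)) :
    EuclideanSpace ℝ (Fin d) :=
  (‖w‖ ^ (1 + s))⁻¹ • w

/-- The support of a measure. -/
def measSupport (d : ℕ) (μ : Measure (EuclideanSpace ℝ (Fin d))) :
    Set (EuclideanSpace ℝ (Fin d)) :=
  {x | ∀ ε : ℝ, 0 < ε → 0 < μ (ball x ε)}

/-!
Split the integral over `B(z, R)`, `R = Mρ/3`, and its complement. On `B(z, R)` each kernel is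
bounded by `(ερ)^{-s}`, because `Ω` stays `ερ` away from `supp ν`. Off `B(z, R)` we have
`|K(y - x) - K(y - x')| ≲ ρ |y - z|^{-(1+s)}`, and summing the growth bound
`ν(B(z, r)) ≤ D r^s` over the dyadic annuli `R 2^k ≤ |y - z| < R 2^(k+1)` gives
`∫_{|y - z| ≥ R} |y - z|^{-(1+s)} dν ≲ D / R = 3D / (Mρ)`.
-/

lemma abs_rpow_neg_sub_rpow_neg_le {c m u v : ℝ} (hc : 0 ≤ c) (hm : 0 < m) (hu : m ≤ u)
    (hv : m ≤ v) : |u ^ (-c) - v ^ (-c)| ≤ c * m ^ (-(c + 1)) * |u - v| := by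
  have hderiv : ∀ t ∈ Ici m,
      HasDerivWithinAt (fun t : ℝ => t ^ (-c)) (-c * t ^ (-c - 1)) (Ici m) t := fun t ht =>
    (Real.hasDerivAt_rpow_const (Or.inl (hm.trans_le ht).ne')).hasDerivWithinAt
  have hbound : ∀ t ∈ Ici m, ‖-c * t ^ (-c - 1)‖ ≤ c * m ^ (-(c + 1)) := fun t ht => by
    rw [norm_mul, norm_neg, Real.norm_of_nonneg hc,
      Real.norm_of_nonneg (Real.rpow_nonneg (hm.le.trans ht) _), show -c - 1 = -(c + 1) by ring]
    exact mul_le_mul_of_nonneg_left (Real.rpow_le_rpow_of_nonpos hm ht (by linarith)) hc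
  simpa only [Real.norm_eq_abs] using
    (convex_Ici m).norm_image_sub_le_of_norm_hasDerivWithin_le hderiv hbound hv hu

lemma monotone_mul_two_pow {R : ℝ} (hR : 0 ≤ R) : Monotone fun k : ℕ => R * 2 ^ k :=
  fun _ _ hjk => mul_le_mul_of_nonneg_left (pow_le_pow_right₀ one_le_two hjk) hR

section DyadicAnnuli

variable {X : Type*} [PseudoMetricSpace X] (z : X) {s R D : ℝ}

def dyadicAnnulus (R : ℝ) (k : ℕ) : Set X :=
  (dist · z) ⁻¹' Ico (R * 2 ^ k) (R * 2 ^ (k + 1))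

lemma pairwise_disjoint_dyadicAnnulus (hR : 0 ≤ R) :
    Pairwise (Function.onFun Disjoint (dyadicAnnulus z R)) := fun _ _ hjk =>
  ((monotone_mul_two_pow hR).pairwise_disjoint_on_Ico_succ hjk).preimage _

lemma iUnion_dyadicAnnulus (hR : 0 < R) : ⋃ k, dyadicAnnulus z R k = (ball z R)ᶜ := by
  have hunbdd : ¬BddAbove (range fun k : ℕ => R * 2 ^ k) := Filter.not_bddAbove_of_tendsto_atTop
    ((tendsto_pow_atTop_atTop_of_one_lt one_lt_two).const_mul_atTop hR)
  have hIco := iUnion_Ico_map_succ_eq_Ici (fun k => monotone_mul_two_pow hR.le (Nat.zero_le k))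
    hunbdd
  simp only [Order.succ_eq_add_one, Nat.bot_eq_zero, pow_zero, mul_one] at hIco
  ext y
  simpa [dyadicAnnulus] using Set.ext_iff.1 hIco (dist y z)

variable [MeasurableSpace X] (ν : Measure X) [IsFiniteMeasure ν]

lemma setIntegral_dyadicAnnulus_dist_rpow_le (hs : -1 ≤ s) (hR : 0 < R)
    (hgrowth : ∀ r > 0, ν.real (ball z r) ≤ D * r ^ s) (k : ℕ) :
    ∫ y in dyadicAnnulus z R k, dist y z ^ (-(1 + s)) ∂ν ≤ 2 ^ s * D / R * (1 / 2) ^ k := by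
  have hrk : 0 < R * 2 ^ k := by positivity
  calc ∫ y in dyadicAnnulus z R k, dist y z ^ (-(1 + s)) ∂ν
      ≤ ‖∫ y in dyadicAnnulus z R k, dist y z ^ (-(1 + s)) ∂ν‖ := Real.le_norm_self _
    _ ≤ (R * 2 ^ k) ^ (-(1 + s)) * ν.real (dyadicAnnulus z R k) := by
        refine norm_setIntegral_le_of_norm_le_const (measure_lt_top _ _) fun y hy => ?_
        rw [Real.norm_of_nonneg (Real.rpow_nonneg dist_nonneg _)]
        exact Real.rpow_le_rpow_of_nonpos hrk hy.1 (by linarith)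
    _ ≤ (R * 2 ^ k) ^ (-(1 + s)) * (D * (2 * (R * 2 ^ k)) ^ s) := by
        gcongr
        refine (measureReal_mono fun y hy => mem_ball.2 ?_).trans (hgrowth _ (by positivity))
        rw [← mul_left_comm, ← pow_succ']
        exact hy.2
    _ = 2 ^ s * D / R * (1 / 2) ^ k := by
        rw [Real.mul_rpow zero_le_two hrk.le, Real.rpow_neg hrk.le, Real.rpow_add hrk,
          Real.rpow_one]
        simp only [one_div, inv_pow]
        field_simp

variable [OpensMeasurableSpace X]

lemma measurableSet_dyadicAnnulus (k : ℕ) : MeasurableSet (dyadicAnnulus z R k) :=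
  (continuous_id.dist continuous_const).measurable measurableSet_Ico

lemma integrableOn_compl_ball_dist_rpow (hs : -1 ≤ s) (hR : 0 < R) :
    IntegrableOn (fun y => dist y z ^ (-(1 + s))) (ball z R)ᶜ ν := by
  refine Measure.integrableOn_of_bounded (M := R ^ (-(1 + s))) (measure_ne_top _ _)
    ((continuous_id.dist continuous_const).measurable.pow_const _).aestronglyMeasurable ?_
  filter_upwards [ae_restrict_mem measurableSet_ball.compl] with y hy
  rw [Real.norm_of_nonneg (Real.rpow_nonneg dist_nonneg _)]
  exact Real.rpow_le_rpow_of_nonpos hR (not_lt.1 hy) (by linarith)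

lemma setIntegral_compl_ball_dist_rpow_le (hs : -1 ≤ s) (hR : 0 < R)
    (hgrowth : ∀ r > 0, ν.real (ball z r) ≤ D * r ^ s) :
    ∫ y in (ball z R)ᶜ, dist y z ^ (-(1 + s)) ∂ν ≤ 2 ^ (1 + s) * D / R := by
  have hsum := hasSum_integral_iUnion (measurableSet_dyadicAnnulus z)
    (pairwise_disjoint_dyadicAnnulus z hR.le)
    (iUnion_dyadicAnnulus z hR ▸ integrableOn_compl_ball_dist_rpow z ν hs hR)
  rw [iUnion_dyadicAnnulus z hR] at hsum
  calc ∫ y in (ball z R)ᶜ, dist y z ^ (-(1 + s)) ∂ν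
      ≤ ∑' k : ℕ, 2 ^ s * D / R * (1 / 2) ^ k := hsum.tsum_eq ▸ hsum.summable.tsum_le_tsum
        (setIntegral_dyadicAnnulus_dist_rpow_le z ν hs hR hgrowth)
        ((summable_geometric_of_lt_one (by norm_num) (by norm_num)).mul_left _)
    _ = 2 ^ (1 + s) * D / R := by
        rw [tsum_mul_left, tsum_geometric_of_lt_one (by norm_num) (by norm_num),
          Real.rpow_add two_pos, Real.rpow_one]
        ring

end DyadicAnnuli

section RieszKernel

variable {d : ℕ} {s : ℝ}

lemma measurable_rieszKernel : Measurable (rieszKernel d s) :=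
  (measurable_norm.pow_const _).inv.smul measurable_id

lemma norm_rieszKernel {w : EuclideanSpace ℝ (Fin d)} (hw : w ≠ 0) :
    ‖rieszKernel d s w‖ = ‖w‖ ^ (-s) := by
  have hw : 0 < ‖w‖ := norm_pos_iff.2 hw
  rw [rieszKernel, norm_smul, norm_inv, Real.norm_of_nonneg (by positivity),
    Real.rpow_add hw, Real.rpow_one, Real.rpow_neg hw.le]
  field_simp

lemma norm_rieszKernel_le_of_le (hs : 0 ≤ s) {w : EuclideanSpace ℝ (Fin d)} {δ : ℝ}
    (hδ : 0 < δ) (hδw : δ ≤ ‖w‖) : ‖rieszKernel d s w‖ ≤ δ ^ (-s) := by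
  rw [norm_rieszKernel (norm_pos_iff.1 (hδ.trans_le hδw))]
  exact Real.rpow_le_rpow_of_nonpos hδ hδw (neg_nonpos.2 hs)

/-- `K a - K b = |a|^{-(1+s)} (a - b) + (|a|^{-(1+s)} - |b|^{-(1+s)}) b`, and the second
coefficient is controlled by the mean value theorem. -/
lemma norm_rieszKernel_sub_le (hs : -1 ≤ s) {a b : EuclideanSpace ℝ (Fin d)} {m : ℝ}
    (hm : 0 < m) (ha : m ≤ ‖a‖) (hb : m ≤ ‖b‖) (hb' : ‖b‖ ≤ 3 * m) :
    ‖rieszKernel d s a - rieszKernel d s b‖ ≤ (4 + 3 * s) * m ^ (-(1 + s)) * ‖a - b‖ := by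
  have hinv : ∀ w : EuclideanSpace ℝ (Fin d), (‖w‖ ^ (1 + s))⁻¹ = ‖w‖ ^ (-(1 + s)) :=
    fun w => (Real.rpow_neg (norm_nonneg w) _).symm
  have hsplit : rieszKernel d s a - rieszKernel d s b
      = ‖a‖ ^ (-(1 + s)) • (a - b) + (‖a‖ ^ (-(1 + s)) - ‖b‖ ^ (-(1 + s))) • b := by
    simp only [rieszKernel, hinv, smul_sub, sub_smul]; abel
  have hfirst : ‖a‖ ^ (-(1 + s)) ≤ m ^ (-(1 + s)) :=
    Real.rpow_le_rpow_of_nonpos hm ha (by linarith)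
  have hs' : 0 ≤ 1 + s := by linarith
  have hsecond :
      |‖a‖ ^ (-(1 + s)) - ‖b‖ ^ (-(1 + s))| ≤ (1 + s) * m ^ (-(1 + s + 1)) * ‖a - b‖ :=
    (abs_rpow_neg_sub_rpow_neg_le hs' hm ha hb).trans
      (mul_le_mul_of_nonneg_left (abs_norm_sub_norm_le a b) (by positivity))
  have hpow : m ^ (-(1 + s + 1)) * m = m ^ (-(1 + s)) := by
    rw [← Real.rpow_add_one hm.ne']; ring_nf
  calc ‖rieszKernel d s a - rieszKernel d s b‖
      ≤ ‖a‖ ^ (-(1 + s)) * ‖a - b‖ + |‖a‖ ^ (-(1 + s)) - ‖b‖ ^ (-(1 + s))| * ‖b‖ := by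
        rw [hsplit]
        refine (norm_add_le _ _).trans_eq ?_
        rw [norm_smul, norm_smul, Real.norm_of_nonneg (by positivity), Real.norm_eq_abs]
    _ ≤ m ^ (-(1 + s)) * ‖a - b‖ + (1 + s) * m ^ (-(1 + s + 1)) * ‖a - b‖ * (3 * m) := by
        have : 0 ≤ (1 + s) * m ^ (-(1 + s + 1)) * ‖a - b‖ := by positivity
        gcongr
    _ = (4 + 3 * s) * m ^ (-(1 + s)) * ‖a - b‖ := by
        linear_combination (3 * (1 + s) * ‖a - b‖) * hpow

lemma norm_rieszKernel_sub_le_of_two_mul_le (hs : -1 ≤ s)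
    {x x' y z : EuclideanSpace ℝ (Fin d)} {ρ : ℝ} (hx : x ∈ ball z ρ) (hx' : x' ∈ ball z ρ)
    (hy : 2 * ρ ≤ dist y z) :
    ‖rieszKernel d s (y - x) - rieszKernel d s (y - x')‖
      ≤ 2 ^ (2 + s) * (4 + 3 * s) * ρ * dist y z ^ (-(1 + s)) := by
  have hρ : 0 < ρ := dist_nonneg.trans_lt (mem_ball.1 hx)
  have ht : 0 < dist y z := by linarith
  have hnear : ∀ w ∈ ball z ρ, dist y z / 2 ≤ ‖y - w‖ := fun w hw => by
    rw [← dist_eq_norm]; linarith [dist_triangle y w z, mem_ball.1 hw]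
  have hfar : ‖y - x'‖ ≤ 3 * (dist y z / 2) := by
    rw [← dist_eq_norm]; linarith [dist_triangle y z x', dist_comm z x', mem_ball.1 hx']
  have hxx' : ‖(y - x) - (y - x')‖ ≤ 2 * ρ := by
    rw [sub_sub_sub_cancel_left, ← dist_eq_norm]
    linarith [dist_triangle_right x' x z, mem_ball.1 hx, mem_ball.1 hx']
  have hhalf : (dist y z / 2) ^ (-(1 + s)) = 2 ^ (1 + s) * dist y z ^ (-(1 + s)) := by
    rw [Real.div_rpow ht.le zero_le_two, Real.rpow_neg zero_le_two, div_inv_eq_mul, mul_comm]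
  calc ‖rieszKernel d s (y - x) - rieszKernel d s (y - x')‖
      ≤ (4 + 3 * s) * (dist y z / 2) ^ (-(1 + s)) * ‖(y - x) - (y - x')‖ :=
        norm_rieszKernel_sub_le hs (by positivity) (hnear x hx) (hnear x' hx') hfar
    _ ≤ (4 + 3 * s) * (dist y z / 2) ^ (-(1 + s)) * (2 * ρ) := by
        have : 0 ≤ 4 + 3 * s := by linarith
        gcongr
    _ = 2 ^ (2 + s) * (4 + 3 * s) * ρ * dist y z ^ (-(1 + s)) := by
        rw [hhalf, show (2 : ℝ) + s = 1 + (1 + s) by ring, Real.rpow_add two_pos 1 (1 + s),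
          Real.rpow_one]
        ring

lemma ae_mem_measSupport (ν : Measure (EuclideanSpace ℝ (Fin d))) :
    ∀ᵐ y ∂ν, y ∈ measSupport d ν := by
  filter_upwards [ν.support_mem_ae] with y hy ε hε
  exact (ν.mem_support_iff_forall y).1 hy _ (ball_mem_nhds y hε)

/-- The Riesz transform `R(g ν)(x)` of the signed measure `g ν`. -/
noncomputable def rieszTransform (d : ℕ) (s : ℝ) (ν : Measure (EuclideanSpace ℝ (Fin d)))
    (g : EuclideanSpace ℝ (Fin d) → ℝ) (x : EuclideanSpace ℝ (Fin d)) :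
    EuclideanSpace ℝ (Fin d) :=
  ∫ y, g y • rieszKernel d s (y - x) ∂ν

variable {ν : Measure (EuclideanSpace ℝ (Fin d))} [IsFiniteMeasure ν]
  {g : EuclideanSpace ℝ (Fin d) → ℝ}

lemma norm_smul_rieszKernel_le (hs : 0 ≤ s) (hg1 : ∀ y, |g y| ≤ 1)
    {x y : EuclideanSpace ℝ (Fin d)} {δ : ℝ} (hδ : 0 < δ) (hδx : δ ≤ dist x y) :
    ‖g y • rieszKernel d s (y - x)‖ ≤ δ ^ (-s) := by
  rw [norm_smul, Real.norm_eq_abs]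
  exact (mul_le_of_le_one_left (norm_nonneg _) (hg1 y)).trans
    (norm_rieszKernel_le_of_le hs hδ (by rwa [← dist_eq_norm, dist_comm]))

lemma integrable_smul_rieszKernel (hs : 0 ≤ s) (hg : Measurable g) (hg1 : ∀ y, |g y| ≤ 1)
    {x : EuclideanSpace ℝ (Fin d)} {δ : ℝ} (hδ : 0 < δ)
    (hδx : ∀ y ∈ measSupport d ν, δ ≤ dist x y) :
    Integrable (fun y => g y • rieszKernel d s (y - x)) ν := by
  refine Integrable.of_bound (C := δ ^ (-s))
    (hg.smul (measurable_rieszKernel.comp (measurable_id.sub_const x))).aestronglyMeasurable ?_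
  filter_upwards [ae_mem_measSupport ν] with y hy
  exact norm_smul_rieszKernel_le hs hg1 hδ (hδx y hy)

theorem norm_rieszTransform_sub_le (hs : 0 ≤ s) (hg : Measurable g) (hg1 : ∀ y, |g y| ≤ 1)
    {z x x' : EuclideanSpace ℝ (Fin d)} {ρ δ R D : ℝ} (hδ : 0 < δ) (hR : 2 * ρ ≤ R)
    (hx : x ∈ ball z ρ) (hx' : x' ∈ ball z ρ) (hδx : ∀ y ∈ measSupport d ν, δ ≤ dist x y)
    (hδx' : ∀ y ∈ measSupport d ν, δ ≤ dist x' y)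
    (hgrowth : ∀ r > 0, ν.real (ball z r) ≤ D * r ^ s) :
    ‖rieszTransform d s ν g x - rieszTransform d s ν g x'‖
      ≤ 2 / δ ^ s * ν.real (ball z R) + 2 ^ (3 + 2 * s) * (4 + 3 * s) * ρ / R * D := by
  have hρ : 0 < ρ := dist_nonneg.trans_lt (mem_ball.1 hx)
  have hR0 : 0 < R := by linarith
  have hint := integrable_smul_rieszKernel hs hg hg1 hδ hδx
  have hint' := integrable_smul_rieszKernel hs hg hg1 hδ hδx'
  have hdiff : Integrable
      (fun y => g y • rieszKernel d s (y - x) - g y • rieszKernel d s (y - x')) ν :=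
    hint.sub hint'
  rw [rieszTransform, rieszTransform, ← integral_sub hint hint',
    ← integral_add_compl measurableSet_ball hdiff]
  refine (norm_add_le _ _).trans (add_le_add ?near ?far)
  case near =>
    refine norm_setIntegral_le_of_norm_le_const_ae' (measure_lt_top _ _) ?_
    filter_upwards [ae_mem_measSupport ν] with y hy _
    calc _ ≤ δ ^ (-s) + δ ^ (-s) := (norm_sub_le _ _).trans (add_le_add
          (norm_smul_rieszKernel_le hs hg1 hδ (hδx y hy))
          (norm_smul_rieszKernel_le hs hg1 hδ (hδx' y hy)))
      _ = 2 / δ ^ s := by rw [Real.rpow_neg hδ.le]; ring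
  case far =>
    have hkernel : ∀ y ∈ (ball z R)ᶜ,
        ‖g y • rieszKernel d s (y - x) - g y • rieszKernel d s (y - x')‖
          ≤ 2 ^ (2 + s) * (4 + 3 * s) * ρ * dist y z ^ (-(1 + s)) := fun y hy => by
      rw [← smul_sub, norm_smul, Real.norm_eq_abs]
      exact (mul_le_of_le_one_left (norm_nonneg _) (hg1 y)).trans
        (norm_rieszKernel_sub_le_of_two_mul_le (by linarith) hx hx' (hR.trans (not_lt.1 hy)))
    calc _ ≤ ∫ y in (ball z R)ᶜ,
          2 ^ (2 + s) * (4 + 3 * s) * ρ * dist y z ^ (-(1 + s)) ∂ν :=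
          norm_integral_le_of_norm_le ((integrableOn_compl_ball_dist_rpow z ν (by linarith)
            hR0).const_mul _) (ae_restrict_of_forall_mem measurableSet_ball.compl hkernel)
      _ ≤ 2 ^ (2 + s) * (4 + 3 * s) * ρ * (2 ^ (1 + s) * D / R) := by
          rw [integral_const_mul]
          have : 0 ≤ 4 + 3 * s := by linarith
          gcongr
          exact setIntegral_compl_ball_dist_rpow_le z ν (by linarith) hR0 hgrowth
      _ = 2 ^ (3 + 2 * s) * (4 + 3 * s) * ρ / R * D := by
          rw [show 3 + 2 * s = (2 + s) + (1 + s) by ring, Real.rpow_add two_pos (2 + s) (1 + s)]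
          ring

end RieszKernel

/-- Oscillation lemma for the Riesz transform of a signed measure `g dν`
(with `|g| ≤ 1`, so that `ν` is the total variation): if `Ω ⊆ B(z,ρ)` is at
distance at least `ερ` from the support of `ν`, then the oscillation of
`R(gν)` over `Ω` is at most
`(2/(ερ)^s) ν(B(z,Mρ/3)) + (C/M) sup_{r>0} ν(B(z,r))/r^s`. -/
theorem riesz_oscillation_lemma
    (d : ℕ) (hd : 2 ≤ d) (s : ℝ) (hs : s ∈ Set.Ioo ((d : ℝ) - 1) d) :
    ∃ C : ℝ, 0 < C ∧
      ∀ (ν : Measure (EuclideanSpace ℝ (Fin d))), IsFiniteMeasure ν →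
      ∀ (g : EuclideanSpace ℝ (Fin d) → ℝ), Measurable g → (∀ y, |g y| ≤ 1) →
      ∀ (z : EuclideanSpace ℝ (Fin d)) (ρ ε M : ℝ)
        (Ω : Set (EuclideanSpace ℝ (Fin d))),
        0 < ρ → ε ∈ Set.Ioo (0 : ℝ) 1 → 6 ≤ M → Ω ⊆ ball z ρ →
        (∀ w ∈ Ω, ∀ y ∈ measSupport d ν, ε * ρ ≤ dist w y) →
        ∀ D : ℝ, 0 ≤ D → (∀ r : ℝ, 0 < r → (ν (ball z r)).toReal ≤ D * r ^ s) →
        ∀ x ∈ Ω, ∀ x' ∈ Ω,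
          ‖(∫ y, g y • rieszKernel d s (y - x) ∂ν) -
              ∫ y, g y • rieszKernel d s (y - x') ∂ν‖ ≤
            2 / (ε * ρ) ^ s * (ν (ball z (M * ρ / 3))).toReal + C / M * D := by
  have hs0 : 0 < s := by
    have : (2 : ℝ) ≤ d := by exact_mod_cast hd
    linarith [hs.1]
  refine ⟨3 * 2 ^ (3 + 2 * s) * (4 + 3 * s), by positivity, ?_⟩
  intro ν _ g hg hg1 z ρ ε M Ω hρ hε hM hΩ hsupp D _ hgrowth x hx x' hx'
  have hosc := norm_rieszTransform_sub_le (R := M * ρ / 3) hs0.le hg hg1 (mul_pos hε.1 hρ)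
    (by nlinarith) (hΩ hx) (hΩ hx') (hsupp x hx) (hsupp x' hx') hgrowth
  refine hosc.trans_eq ?_
  congr 1
  field_simp
end
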